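/- Let δ, μ, β be real constants with δ ≠ 0 and β ≠ 0. Define θ(t,x) = μx/(10δ) + 6μ³t/(250δ²) and U(t,x) = (3μ²/(25βδ))·sech²(θ(t,x)) + (6μ²/(25βδ))·tanh(θ(t,x)) + 6μ²/(25βδ). Then U satisfies the constant-coefficient Korteweg–de Vries–Burgers equation ∂ₜU(t,x) = δ·∂ₓₓₓU(t,x) + μ·∂ₓₓU(t,x) + β·U(t,x)·∂ₓU(t,x) for all (t,x) ∈ ℝ × ℝ. -/

import Mathlib

/-!
With `μ = 10 δ a`, the wave is `U t x = A ψ (a x + 24 δ a³ t)` where `A = 3μ²/(25βδ)`,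
`β A = 12 δ a²` and `ψ = 3 + 2 tanh - tanh²` (using `sech² = 1 - tanh²`). Each `∂ₓ` brings out
a factor `a` and `∂ₜ` a factor `24 δ a³`, so the equation reduces to the profile ODE
`ψ''' + 10 ψ'' + 12 ψ ψ' = 24 ψ'`. Since `d/ds p(tanh s) = (p' · (1 - X²))(tanh s)`, every
derivative of `ψ` is a polynomial in `tanh`, and the ODE becomes a polynomial identity.
-/

open Real Polynomial

theorem Real.hasDerivAt_tanh (x : ℝ) : HasDerivAt tanh (1 - tanh x ^ 2) x := by
  have h : HasDerivAt (fun y => sinh y / cosh y) _ x :=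
    (hasDerivAt_sinh x).div (hasDerivAt_cosh x) (cosh_pos x).ne'
  rw [show tanh = fun y => sinh y / cosh y from funext tanh_eq_sinh_div_cosh]
  refine h.congr_deriv ?_
  field_simp

theorem Real.inv_cosh_sq (x : ℝ) : (cosh x)⁻¹ ^ 2 = 1 - tanh x ^ 2 := by
  rw [tanh_eq_sinh_div_cosh]
  field_simp
  linear_combination -cosh_sq_sub_sinh_sq x

theorem deriv_eval_tanh (p : ℝ[X]) :
    deriv (fun s => p.eval (tanh s)) = fun s => (derivative p * (1 - X ^ 2)).eval (tanh s) := by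
  ext s
  refine ((p.hasDerivAt (tanh s)).comp s (hasDerivAt_tanh s)).deriv.trans ?_
  simp

theorem iterate_deriv_eval_tanh (p : ℝ[X]) (n : ℕ) :
    deriv^[n] (fun s => p.eval (tanh s)) =
      fun s => ((fun q => derivative q * (1 - X ^ 2))^[n] p).eval (tanh s) := by
  induction n with
  | zero => rfl
  | succ n ih =>
    rw [Function.iterate_succ_apply', ih, deriv_eval_tanh, Function.iterate_succ_apply']

theorem deriv_const_mul_comp_affine (f : ℝ → ℝ) (A a b : ℝ) :
    deriv (fun y => A * f (a * y + b)) = fun y => A * a * deriv f (a * y + b) := by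
  ext y
  rw [deriv_const_mul_field, deriv_comp_mul_left a (fun z => f (z + b)), deriv_comp_add_const]
  simp [mul_assoc]

theorem iterate_deriv_const_mul_comp_affine (f : ℝ → ℝ) (A a b : ℝ) (n : ℕ) :
    deriv^[n] (fun y => A * f (a * y + b)) = fun y => A * a ^ n * deriv^[n] f (a * y + b) := by
  induction n with
  | zero => simp
  | succ n ih =>
    rw [Function.iterate_succ_apply', ih]
    ext y
    rw [deriv_const_mul_comp_affine, Function.iterate_succ_apply']
    ring

noncomputable def kdvBurgersProfile (s : ℝ) : ℝ := (3 + 2 * X - X ^ 2 : ℝ[X]).eval (tanh s)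

theorem kdvBurgersProfile_ode (s : ℝ) :
    deriv^[3] kdvBurgersProfile s + 10 * deriv^[2] kdvBurgersProfile s
      + 12 * kdvBurgersProfile s * deriv kdvBurgersProfile s = 24 * deriv kdvBurgersProfile s := by
  have h := iterate_deriv_eval_tanh (3 + 2 * X - X ^ 2)
  unfold kdvBurgersProfile
  rw [h, h, show deriv _ = _ from h 1]
  simp only [Function.iterate_succ_apply', Function.iterate_zero_apply, derivative_mul,
    derivative_sub, derivative_add, derivative_X_pow, derivative_X, derivative_ofNat, derivative_one,
    derivative_zero, derivative_C, eval_mul, eval_sub, eval_add, eval_pow, eval_X, eval_ofNat,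
    eval_one, eval_C, eval_zero]
  ring

/-- The explicit traveling-wave solution of the constant-coefficient
Korteweg–de Vries–Burgers equation
`∂ₜU = δ ∂ₓₓₓU + μ ∂ₓₓU + β U ∂ₓU`.
Here `sech y = (cosh y)⁻¹`, `∂ₜ` is the derivative in the first (time) variable,
and `∂ₓ, ∂ₓₓ, ∂ₓₓₓ` the first, second and third derivatives in the second
(space) variable. -/
theorem kdv_burgers_traveling_wave_solution
    (δ μ β : ℝ) (hδ : δ ≠ 0) (hβ : β ≠ 0)
    (θ : ℝ → ℝ → ℝ)
    (hθ : ∀ t x, θ t x = μ * x / (10 * δ) + 6 * μ ^ 3 * t / (250 * δ ^ 2))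
    (U : ℝ → ℝ → ℝ)
    (hU : ∀ t x, U t x =
      (3 * μ ^ 2 / (25 * β * δ)) * ((Real.cosh (θ t x))⁻¹) ^ 2 +
        (6 * μ ^ 2 / (25 * β * δ)) * Real.tanh (θ t x) +
        6 * μ ^ 2 / (25 * β * δ)) :
    ∀ t x, deriv (fun τ => U τ x) t =
      δ * deriv (deriv (deriv (fun y => U t y))) x +
        μ * deriv (deriv (fun y => U t y)) x +
        β * U t x * deriv (fun y => U t y) x := by
  intro t x
  obtain ⟨a, rfl⟩ : ∃ a, μ = 10 * δ * a := ⟨μ / (10 * δ), by field_simp⟩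
  obtain ⟨A, hA⟩ : ∃ A, A = 3 * (10 * δ * a) ^ 2 / (25 * β * δ) := ⟨_, rfl⟩
  have hβA : β * A = 12 * δ * a ^ 2 := by
    rw [hA]
    field_simp
    ring
  have hUψ : ∀ t x, U t x = A * kdvBurgersProfile (a * x + 24 * δ * a ^ 3 * t) := by
    intro t x
    have harg : θ t x = a * x + 24 * δ * a ^ 3 * t := by
      rw [hθ]
      field_simp
      ring
    rw [hU, harg, inv_cosh_sq, kdvBurgersProfile, hA]
    simp only [eval_sub, eval_add, eval_mul, eval_ofNat, eval_X, eval_pow]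
    ring
  have hspace (n : ℕ) : deriv^[n] (fun y => U t y) x =
      A * a ^ n * deriv^[n] kdvBurgersProfile (a * x + 24 * δ * a ^ 3 * t) := by
    simp only [hUψ, iterate_deriv_const_mul_comp_affine]
  have htime : deriv (fun τ => U τ x) t =
      A * (24 * δ * a ^ 3) * deriv kdvBurgersProfile (a * x + 24 * δ * a ^ 3 * t) := by
    simp only [hUψ, add_comm (a * x), deriv_const_mul_comp_affine]
  change _ = δ * deriv^[3] (fun y => U t y) x + 10 * δ * a * deriv^[2] (fun y => U t y) x +
    β * U t x * deriv^[1] (fun y => U t y) x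
  rw [htime, hspace, hspace, hspace, hUψ t x, Function.iterate_one]
  set s := a * x + 24 * δ * a ^ 3 * t
  linear_combination (-δ * A * a ^ 3) * kdvBurgersProfile_ode s
    - A * a * kdvBurgersProfile s * deriv kdvBurgersProfile s * hβA
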